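/- arXiv:0810.2516 — 4 statements merged into one kernel-verified Lean document; each statement's English description precedes it below -/
import Mathlib

section
/- (Lemma 2.) Let m ≠ n be nonnegative integers, E ⊂ ℝ a closed bounded interval, and Z a continuous map from {λ ∈ ℂ : Re λ ∈ E, 0 ≤ Im λ ≤ ε₁} into ℍ (for some ε₁ > 0) satisfying Z(λ) = φ(Z(λ), Z(λ), 0,…,0, λ) on its domain. Then for every p ∈ (0,1) there exist positive constants ε₀ ≤ ε₁, C and a compact set K ⊂ ℍ × ℍ such that for all (z_1, z_2) ∈ (ℍ × ℍ) \ K, all q_1,…,q_M ∈ ℝ and all λ ∈ R(E, ε₀): μ_p(z_1, z_2, q_1,…,q_M, λ) ≤ C · ∏_{i=1}^{M} (1 + |q_i|^{2(1+p)}), where μ_p is computed with the weight based at s = Z(λ). -/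
open Complex MeasureTheory

noncomputable section

/-- The iterated map `φ_j(z, q_1,…,q_j, λ)`: `φ_0 = z`,
`φ_j = −1/(φ_{j−1} + λ − q_j + 1)`, where `q_j` is `q (j-1)`. -/
def phiIter (lam : ℂ) (q : ℕ → ℝ) : ℕ → ℂ → ℂ
  | 0, z => z
  | (j+1), z => -1 / (phiIter lam q j z + lam - (q j : ℂ) + 1)

/-- `φ(z₁, z₂, q_1,…,q_M, λ)` with `M = m+n+1`:
`z₁` passes through the `n`-chain with `q_1,…,q_n`, `z₂` through the `m`-chain with
`q_{n+1},…,q_{n+m}`, and `q_M = q (n+m)`. -/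
def phiMap (m n : ℕ) (lam : ℂ) (q : ℕ → ℝ) (z₁ z₂ : ℂ) : ℂ :=
  -1 / (phiIter lam q n z₁ + phiIter lam (fun i => q (n + i)) m z₂ + lam - (q (n + m) : ℂ))

/-- The weight based at `s`: `w_s(z) = |z−s|²/(Im z · Im s)`. -/
def wt (s z : ℂ) : ℝ := ‖z - s‖ ^ 2 / (z.im * s.im)

/-- `μ_p(z₁, z₂, q, λ)`, computed with the weight based at `s`. -/
def muP (m n : ℕ) (p : ℝ) (s lam : ℂ) (q : ℕ → ℝ) (z₁ z₂ : ℂ) : ℝ :=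
  (wt s (phiMap m n lam q z₁ z₂) ^ (1 + p) + wt s (phiMap m n lam q z₂ z₁) ^ (1 + p)) /
    (wt s z₁ ^ (1 + p) + wt s z₂ ^ (1 + p))

/-- The linear polynomials `R_k(z)`: `R_0 = 1`, `R_1 = 1+λ+z`,
`R_{k+1} = (1+λ)R_k − R_{k−1}`, as functions of `z`. -/
def Rfun (lam : ℂ) : ℕ → ℂ → ℂ
  | 0, _ => 1
  | 1, z => 1 + lam + z
  | (k+2), z => (1 + lam) * Rfun lam (k+1) z - Rfun lam k z

/-- `λ` (with associated fixed point `zlam = Z(λ)`) is nondegenerate: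
(a) `R_m, R_n` have no common real zero and their `z`-coefficients do not both vanish;
(b) `R_n(zlam)/R_m(zlam)` is neither real nor purely imaginary. -/
def Nondeg (m n : ℕ) (lam zlam : ℂ) : Prop :=
  (¬ ∃ x : ℝ, Rfun lam m x = 0 ∧ Rfun lam n x = 0) ∧
  (¬ ((Rfun lam m 1 - Rfun lam m 0 = 0) ∧ (Rfun lam n 1 - Rfun lam n 0 = 0))) ∧
  (Rfun lam n zlam / Rfun lam m zlam).im ≠ 0 ∧
  (Rfun lam n zlam / Rfun lam m zlam).re ≠ 0

/-- The strip `R(E,ε) = {λ : Re λ ∈ E, 0 < Im λ ≤ ε}`. -/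
def strip (E : Set ℝ) (ε : ℝ) : Set ℂ := {lam : ℂ | lam.re ∈ E ∧ 0 < lam.im ∧ lam.im ≤ ε}

/-- The closed strip `{λ : Re λ ∈ E, 0 ≤ Im λ ≤ ε}` (domain of `Z`). -/
def closedStrip (E : Set ℝ) (ε : ℝ) : Set ℂ :=
  {lam : ℂ | lam.re ∈ E ∧ 0 ≤ lam.im ∧ lam.im ≤ ε}


/-!
Everything is controlled through `h(z) = (1 + |z|²) / Im z = 2 cosh d(i, z)`. The inversion
`z ↦ -1/z` preserves `h`, a translation by `c` with `Im c ≥ 0` multiplies it by at most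
`2 (1 + |c|²)`, and `h(u + v) ≤ 2 (h(u) + h(v))`; so along the chains defining `φ` each step
multiplies `h` by at most `C (1 + q_i²)`. By the hyperbolic triangle inequality, `w_s + 2` and `h`
are comparable uniformly for `s = Z(λ)` in the compact image of the closed strip, whence
`w_s(φ) ≤ C' ∏ (1 + q_i²) (w_s(z₁) + w_s(z₂) + 4)`. Off the compact set `{h(z₁), h(z₂) ≤ 3H}` one
of the `w_s(z_i)` exceeds `1` and absorbs the additive constant; raising to the power `1 + p`
gives the bound.
-/

-- `2 cosh d(i, z)` for the hyperbolic distance `d` on `ℍ`; equivalently `wt I z + 2`.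
def twoCoshDistI (z : ℂ) : ℝ := (1 + normSq z) / z.im

lemma im_neg_one_div (w : ℂ) : (-1 / w).im = w.im / normSq w := by
  simp [div_eq_mul_inv, inv_im]

lemma im_neg_one_div_pos {w : ℂ} (hw : 0 < w.im) : 0 < (-1 / w).im := by
  have hw₀ : w ≠ 0 := fun h => by simp [h] at hw
  rw [im_neg_one_div]
  exact div_pos hw (normSq_pos.2 hw₀)

lemma twoCoshDistI_pos {z : ℂ} (hz : 0 < z.im) : 0 < twoCoshDistI z := by
  have := normSq_nonneg z
  unfold twoCoshDistI
  positivity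

lemma twoCoshDistI_le_iff {z : ℂ} (hz : 0 < z.im) (T : ℝ) :
    twoCoshDistI z ≤ T ↔ 1 + normSq z ≤ T * z.im :=
  div_le_iff₀ hz

lemma continuousOn_twoCoshDistI : ContinuousOn twoCoshDistI {z : ℂ | 0 < z.im} :=
  ((continuous_const.add continuous_normSq).continuousOn).div continuous_im.continuousOn
    fun _ hz => hz.ne'

lemma twoCoshDistI_neg_one_div (z : ℂ) : twoCoshDistI (-1 / z) = twoCoshDistI z := by
  rcases eq_or_ne z 0 with rfl | hz
  · simp
  have hN : normSq z ≠ 0 := normSq_eq_zero.not.2 hz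
  rw [twoCoshDistI, twoCoshDistI, im_neg_one_div, normSq_div, normSq_neg, normSq_one]
  field_simp
  ring

lemma normSq_add_le (z w : ℂ) : normSq (z + w) ≤ 2 * normSq z + 2 * normSq w := by
  simp only [normSq_apply, add_re, add_im]
  nlinarith [sq_nonneg (z.re - w.re), sq_nonneg (z.im - w.im)]

lemma twoCoshDistI_add_le {z c : ℂ} (hz : 0 < z.im) (hc : 0 ≤ c.im) :
    twoCoshDistI (z + c) ≤ 2 * (1 + normSq c) * twoCoshDistI z := by
  have hnum : 1 + normSq (z + c) ≤ 2 * (1 + normSq c) * (1 + normSq z) := by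
    nlinarith [normSq_add_le z c, mul_nonneg (normSq_nonneg c) (normSq_nonneg z)]
  calc twoCoshDistI (z + c) ≤ (1 + normSq (z + c)) / z.im := by
        unfold twoCoshDistI
        gcongr
        · linarith [normSq_nonneg (z + c)]
        · simp only [add_im]; linarith
    _ ≤ 2 * (1 + normSq c) * (1 + normSq z) / z.im := by gcongr
    _ = 2 * (1 + normSq c) * twoCoshDistI z := by rw [twoCoshDistI, mul_div_assoc]

lemma twoCoshDistI_add_le_add {u v : ℂ} (hu : 0 < u.im) (hv : 0 < v.im) :
    twoCoshDistI (u + v) ≤ 2 * (twoCoshDistI u + twoCoshDistI v) := by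
  have hnum : 1 + normSq (u + v) ≤ 2 * (1 + normSq u) + 2 * (1 + normSq v) := by
    linarith [normSq_add_le u v]
  have huv : (u + v).im = u.im + v.im := add_im u v
  calc twoCoshDistI (u + v)
      ≤ 2 * (1 + normSq u) / (u.im + v.im) + 2 * (1 + normSq v) / (u.im + v.im) := by
        rw [twoCoshDistI, huv, ← add_div]
        gcongr
    _ ≤ 2 * (1 + normSq u) / u.im + 2 * (1 + normSq v) / v.im := by
        have := normSq_nonneg u
        have := normSq_nonneg v
        gcongr <;> linarith
    _ = 2 * (twoCoshDistI u + twoCoshDistI v) := by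
        simp only [twoCoshDistI]; ring

-- Both are `cosh (d₁ + d₂) ≤ 2 cosh d₁ cosh d₂` for the hyperbolic distance, in coordinates.
lemma twoCoshDistI_le_mul_wt_add_two {s z : ℂ} (hs : 0 < s.im) (hz : 0 < z.im) :
    twoCoshDistI z ≤ twoCoshDistI s * (wt s z + 2) := by
  rw [wt, Complex.sq_norm, twoCoshDistI, twoCoshDistI, div_le_iff₀ hz,
    div_add' _ _ _ (by positivity), div_mul_div_comm, div_mul_eq_mul_div, le_div_iff₀ (by positivity)]
  simp only [normSq_apply, sub_re, sub_im]
  nlinarith [sq_nonneg (z.re - s.re), sq_nonneg z.im, sq_nonneg (s.re * z.im),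
    sq_nonneg (s.re * (z.re - s.re) - s.im ^ 2)]

lemma wt_add_two_le_mul {s z : ℂ} (hs : 0 < s.im) (hz : 0 < z.im) :
    wt s z + 2 ≤ twoCoshDistI s * twoCoshDistI z := by
  rw [wt, Complex.sq_norm, twoCoshDistI, twoCoshDistI, div_mul_div_comm,
    div_add' _ _ _ (by positivity), mul_comm s.im z.im]
  gcongr
  simp only [normSq_apply, sub_re, sub_im]
  nlinarith [sq_nonneg (1 + s.re * z.re), sq_nonneg (s.re * z.im), sq_nonneg (s.im * z.re),
    sq_nonneg (s.im * z.im)]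

lemma one_add_normSq_sub_ofReal_le (w : ℂ) (x : ℝ) :
    1 + normSq (w - x) ≤ 2 * (1 + normSq w) * (1 + x ^ 2) := by
  simp only [normSq_apply, sub_re, sub_im, ofReal_re, ofReal_im, sub_zero]
  nlinarith [sq_nonneg (w.re + x), mul_nonneg (mul_self_nonneg w.re) (sq_nonneg x),
    mul_nonneg (mul_self_nonneg w.im) (sq_nonneg x)]

lemma normSq_le_sq_of_norm_le {w : ℂ} {B : ℝ} (h : ‖w‖ ≤ B) : normSq w ≤ B ^ 2 := by
  rw [← Complex.sq_norm]
  exact pow_le_pow_left₀ (norm_nonneg w) h 2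

lemma phiIter_im_pos {lam : ℂ} (q : ℕ → ℝ) (hlam : 0 < lam.im) {z : ℂ} (hz : 0 < z.im) :
    ∀ j, 0 < (phiIter lam q j z).im
  | 0 => hz
  | j + 1 => im_neg_one_div_pos <| by
      simp only [add_im, sub_im, ofReal_im, one_im]
      linarith [phiIter_im_pos q hlam hz j]

lemma twoCoshDistI_phiIter_le {lam : ℂ} {L : ℝ} (q : ℕ → ℝ) (hlam : 0 < lam.im)
    (hlamL : ‖lam‖ ≤ L) {z : ℂ} (hz : 0 < z.im) (j : ℕ) :
    twoCoshDistI (phiIter lam q j z) ≤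
      (4 * (1 + (L + 1) ^ 2)) ^ j * (∏ i ∈ Finset.range j, (1 + q i ^ 2)) * twoCoshDistI z := by
  induction j with
  | zero => simp [phiIter]
  | succ j ih =>
    have hstep : phiIter lam q (j + 1) z = -1 / (phiIter lam q j z + ((lam + 1) - q j)) := by
      rw [phiIter]; ring
    have hc : 1 + normSq ((lam + 1) - q j) ≤ 2 * (1 + (L + 1) ^ 2) * (1 + q j ^ 2) := by
      have h1 : normSq (lam + 1) ≤ (L + 1) ^ 2 :=
        normSq_le_sq_of_norm_le ((norm_add_le _ _).trans (by simpa using hlamL))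
      refine (one_add_normSq_sub_ofReal_le _ _).trans ?_
      gcongr
    rw [hstep, twoCoshDistI_neg_one_div, Finset.prod_range_succ, pow_succ]
    have hpos := twoCoshDistI_pos (phiIter_im_pos q hlam hz j)
    calc twoCoshDistI (phiIter lam q j z + ((lam + 1) - q j))
        ≤ 2 * (1 + normSq ((lam + 1) - q j)) * twoCoshDistI (phiIter lam q j z) :=
          twoCoshDistI_add_le (phiIter_im_pos q hlam hz j) (by simpa using hlam.le)
      _ ≤ 2 * (2 * (1 + (L + 1) ^ 2) * (1 + q j ^ 2)) *
          ((4 * (1 + (L + 1) ^ 2)) ^ j * (∏ i ∈ Finset.range j, (1 + q i ^ 2)) *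
            twoCoshDistI z) := by
          gcongr
      _ = _ := by ring

def phiMapGrowth (m n : ℕ) (L : ℝ) : ℝ := 8 * (1 + L ^ 2) * (4 * (1 + (L + 1) ^ 2)) ^ (m + n)

lemma phiMapGrowth_pos (m n : ℕ) (L : ℝ) : 0 < phiMapGrowth m n L := by
  unfold phiMapGrowth
  positivity

lemma one_le_prod_one_add_sq (q : ℕ → ℝ) (s : Finset ℕ) :
    1 ≤ ∏ i ∈ s, (1 + q i ^ 2) :=
  Finset.one_le_prod fun i _ => le_add_of_nonneg_right (sq_nonneg (q i))

lemma twoCoshDistI_phiMap_le {m n : ℕ} {lam : ℂ} {L : ℝ} (q : ℕ → ℝ) (hlam : 0 < lam.im)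
    (hlamL : ‖lam‖ ≤ L) {z₁ z₂ : ℂ} (hz₁ : 0 < z₁.im) (hz₂ : 0 < z₂.im) :
    twoCoshDistI (phiMap m n lam q z₁ z₂) ≤
      phiMapGrowth m n L * (∏ i ∈ Finset.range (m + n + 1), (1 + q i ^ 2)) *
        (twoCoshDistI z₁ + twoCoshDistI z₂) := by
  set u := phiIter lam q n z₁
  set v := phiIter lam (fun i => q (n + i)) m z₂
  set κ : ℝ := 4 * (1 + (L + 1) ^ 2)
  set Pu := ∏ i ∈ Finset.range n, (1 + q i ^ 2)
  set Pv := ∏ i ∈ Finset.range m, (1 + q (n + i) ^ 2)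
  have hu : 0 < u.im := phiIter_im_pos q hlam hz₁ n
  have hv : 0 < v.im := phiIter_im_pos _ hlam hz₂ m
  have hP : ∏ i ∈ Finset.range (m + n + 1), (1 + q i ^ 2) = Pu * Pv * (1 + q (n + m) ^ 2) := by
    rw [add_comm m n, Finset.prod_range_succ, Finset.prod_range_add]
  have hc : 1 + normSq (lam - q (n + m)) ≤ 2 * (1 + L ^ 2) * (1 + q (n + m) ^ 2) := by
    refine (one_add_normSq_sub_ofReal_le _ _).trans ?_
    gcongr
    exact normSq_le_sq_of_norm_le hlamL
  have hκ : 1 ≤ κ := by nlinarith [sq_nonneg (L + 1)]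
  have hPu := one_le_prod_one_add_sq q (Finset.range n)
  have hPv := one_le_prod_one_add_sq (fun i => q (n + i)) (Finset.range m)
  have hbu : twoCoshDistI u ≤ κ ^ (m + n) * (Pu * Pv) * twoCoshDistI z₁ := by
    refine (twoCoshDistI_phiIter_le q hlam hlamL hz₁ n).trans ?_
    have := twoCoshDistI_pos hz₁
    gcongr
    · exact Nat.le_add_left n m
    · exact le_mul_of_one_le_right (by linarith) hPv
  have hbv : twoCoshDistI v ≤ κ ^ (m + n) * (Pu * Pv) * twoCoshDistI z₂ := by
    refine (twoCoshDistI_phiIter_le _ hlam hlamL hz₂ m).trans ?_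
    have := twoCoshDistI_pos hz₂
    gcongr
    · exact Nat.le_add_right m n
    · exact le_mul_of_one_le_left (by linarith) hPu
  have hphi : phiMap m n lam q z₁ z₂ = -1 / (u + v + (lam - q (n + m))) := by
    rw [phiMap, add_sub_assoc]
  rw [hphi, twoCoshDistI_neg_one_div, hP, phiMapGrowth]
  calc twoCoshDistI (u + v + (lam - q (n + m)))
      ≤ 2 * (1 + normSq (lam - q (n + m))) * twoCoshDistI (u + v) :=
        twoCoshDistI_add_le (by simp only [add_im]; linarith) (by simpa using hlam.le)
    _ ≤ 2 * (2 * (1 + L ^ 2) * (1 + q (n + m) ^ 2)) *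
        (2 * (twoCoshDistI u + twoCoshDistI v)) := by
        have := twoCoshDistI_pos (add_im u v ▸ add_pos hu hv : 0 < (u + v).im)
        gcongr
        exact twoCoshDistI_add_le_add hu hv
    _ ≤ 2 * (2 * (1 + L ^ 2) * (1 + q (n + m) ^ 2)) *
        (2 * (κ ^ (m + n) * (Pu * Pv) * twoCoshDistI z₁ +
          κ ^ (m + n) * (Pu * Pv) * twoCoshDistI z₂)) := by
        gcongr
    _ = 8 * (1 + L ^ 2) * κ ^ (m + n) * (Pu * Pv * (1 + q (n + m) ^ 2)) *
        (twoCoshDistI z₁ + twoCoshDistI z₂) := by ring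

lemma wt_nonneg {s z : ℂ} (hs : 0 < s.im) (hz : 0 < z.im) : 0 ≤ wt s z := by
  unfold wt
  positivity

lemma phiMap_im_pos (m n : ℕ) {lam : ℂ} (q : ℕ → ℝ) (hlam : 0 < lam.im) {z₁ z₂ : ℂ}
    (hz₁ : 0 < z₁.im) (hz₂ : 0 < z₂.im) : 0 < (phiMap m n lam q z₁ z₂).im :=
  im_neg_one_div_pos <| by
    simp only [add_im, sub_im, ofReal_im]
    linarith [phiIter_im_pos q hlam hz₁ n, phiIter_im_pos (fun i => q (n + i)) hlam hz₂ m]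

lemma wt_phiMap_le {m n : ℕ} {s lam : ℂ} {L : ℝ} (q : ℕ → ℝ) (hs : 0 < s.im)
    (hlam : 0 < lam.im) (hlamL : ‖lam‖ ≤ L) {z₁ z₂ : ℂ} (hz₁ : 0 < z₁.im) (hz₂ : 0 < z₂.im) :
    wt s (phiMap m n lam q z₁ z₂) ≤ twoCoshDistI s ^ 2 * phiMapGrowth m n L *
      (∏ i ∈ Finset.range (m + n + 1), (1 + q i ^ 2)) * (wt s z₁ + wt s z₂ + 4) := by
  have hφ := phiMap_im_pos m n q hlam hz₁ hz₂
  have hhs := twoCoshDistI_pos hs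
  have hG := (phiMapGrowth_pos m n L).le
  have hP := (one_le_prod_one_add_sq q (Finset.range (m + n + 1))).trans' zero_le_one
  calc wt s (phiMap m n lam q z₁ z₂)
      ≤ twoCoshDistI s * twoCoshDistI (phiMap m n lam q z₁ z₂) := by
        linarith [wt_add_two_le_mul hs hφ]
    _ ≤ twoCoshDistI s * (phiMapGrowth m n L *
          (∏ i ∈ Finset.range (m + n + 1), (1 + q i ^ 2)) *
          (twoCoshDistI s * (wt s z₁ + 2) + twoCoshDistI s * (wt s z₂ + 2))) := by
        gcongr
        refine (twoCoshDistI_phiMap_le q hlam hlamL hz₁ hz₂).trans ?_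
        gcongr
        exacts [twoCoshDistI_le_mul_wt_add_two hs hz₁, twoCoshDistI_le_mul_wt_add_two hs hz₂]
    _ = _ := by ring

lemma add_rpow_one_add_le {x y p : ℝ} (hx : 0 ≤ x) (hy : 0 ≤ y) (hp : 0 ≤ p) :
    (x + y) ^ (1 + p) ≤ 2 ^ p * (x ^ (1 + p) + y ^ (1 + p)) := by
  lift x to NNReal using hx
  lift y to NNReal using hy
  have h := NNReal.rpow_add_le_mul_rpow_add_rpow x y (p := 1 + p) (by linarith)
  rw [add_sub_cancel_left] at h
  exact_mod_cast h

lemma prod_one_add_sq_rpow_le (q : ℕ → ℝ) (M : ℕ) {p : ℝ} (hp : 0 ≤ p) :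
    (∏ i ∈ Finset.range M, (1 + q i ^ 2)) ^ (1 + p) ≤
      (2 ^ p) ^ M * ∏ i ∈ Finset.range M, (1 + |q i| ^ (2 * (1 + p))) := by
  have hsq (x : ℝ) : (x ^ 2) ^ (1 + p) = |x| ^ (2 * (1 + p)) := by
    rw [← sq_abs, Real.rpow_mul (abs_nonneg x), Real.rpow_two]
  rw [← Real.finsetProd_rpow _ _ fun i _ => by positivity, ← Finset.card_range M,
    ← Finset.prod_const, Finset.card_range, ← Finset.prod_mul_distrib]
  gcongr with i
  simpa [hsq] using add_rpow_one_add_le zero_le_one (sq_nonneg (q i)) hp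

lemma rpow_add_rpow_div_le {a b x y c p : ℝ} (hp : 0 ≤ p) (ha : 0 ≤ a) (hb : 0 ≤ b)
    (hx : 0 ≤ x) (hy : 0 ≤ y) (hxy : 0 < x + y) (hac : a ≤ c * (x + y))
    (hbc : b ≤ c * (x + y)) :
    (a ^ (1 + p) + b ^ (1 + p)) / (x ^ (1 + p) + y ^ (1 + p)) ≤ 2 * 2 ^ p * c ^ (1 + p) := by
  have hc : 0 ≤ c := nonneg_of_mul_nonneg_left (ha.trans hac) hxy
  have hsum := add_rpow_one_add_le hx hy hp
  have hden : 0 < x ^ (1 + p) + y ^ (1 + p) := by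
    have := Real.rpow_pos_of_pos hxy (1 + p)
    by_contra! h
    nlinarith [Real.rpow_pos_of_pos (two_pos : (0 : ℝ) < 2) p]
  have hpow {d : ℝ} (hd : 0 ≤ d) (hdc : d ≤ c * (x + y)) :
      d ^ (1 + p) ≤ c ^ (1 + p) * (2 ^ p * (x ^ (1 + p) + y ^ (1 + p))) := by
    calc d ^ (1 + p) ≤ (c * (x + y)) ^ (1 + p) := by gcongr
      _ = c ^ (1 + p) * (x + y) ^ (1 + p) := Real.mul_rpow hc hxy.le
      _ ≤ _ := by gcongr
  rw [div_le_iff₀ hden]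
  linarith [hpow ha hac, hpow hb hbc]

lemma muP_le {m n : ℕ} {p H L : ℝ} {s lam z₁ z₂ : ℂ} (q : ℕ → ℝ) (hp : 0 ≤ p)
    (hs : 0 < s.im) (hsH : twoCoshDistI s ≤ H) (hlam : 0 < lam.im) (hlamL : ‖lam‖ ≤ L)
    (hz₁ : 0 < z₁.im) (hz₂ : 0 < z₂.im)
    (hfar : 3 * H < twoCoshDistI z₁ ∨ 3 * H < twoCoshDistI z₂) :
    muP m n p s lam q z₁ z₂ ≤ 2 * 2 ^ p * (5 * H ^ 2 * phiMapGrowth m n L) ^ (1 + p) *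
      (2 ^ p) ^ (m + n + 1) * ∏ i ∈ Finset.range (m + n + 1), (1 + |q i| ^ (2 * (1 + p))) := by
  set P := ∏ i ∈ Finset.range (m + n + 1), (1 + q i ^ 2)
  set c := 5 * H ^ 2 * phiMapGrowth m n L
  have hhs := twoCoshDistI_pos hs
  have hw₁ := wt_nonneg hs hz₁
  have hw₂ := wt_nonneg hs hz₂
  have hw : 1 < wt s z₁ + wt s z₂ := by
    have one_lt_wt {z : ℂ} (hz : 0 < z.im) (h : 3 * H < twoCoshDistI z) : 1 < wt s z := by
      nlinarith [twoCoshDistI_le_mul_wt_add_two hs hz]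
    rcases hfar with h | h
    · linarith [one_lt_wt hz₁ h]
    · linarith [one_lt_wt hz₂ h]
  have hP : 0 ≤ P := (one_le_prod_one_add_sq q _).trans' zero_le_one
  have hG := (phiMapGrowth_pos m n L).le
  have habsorb : twoCoshDistI s ^ 2 * phiMapGrowth m n L * P * (wt s z₁ + wt s z₂ + 4) ≤
      c * P * (wt s z₁ + wt s z₂) := by
    have : twoCoshDistI s ^ 2 ≤ H ^ 2 := by gcongr
    calc _ ≤ H ^ 2 * phiMapGrowth m n L * P * (5 * (wt s z₁ + wt s z₂)) := by gcongr; linarith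
      _ = _ := by ring
  have h₁₂ := (wt_phiMap_le (m := m) (n := n) q hs hlam hlamL hz₁ hz₂).trans habsorb
  have h₂₁ := wt_phiMap_le (m := m) (n := n) q hs hlam hlamL hz₂ hz₁
  rw [add_comm (wt s z₂)] at h₂₁
  replace h₂₁ := h₂₁.trans habsorb
  have hc : 0 ≤ c := by positivity
  calc muP m n p s lam q z₁ z₂ ≤ 2 * 2 ^ p * (c * P) ^ (1 + p) :=
        rpow_add_rpow_div_le hp (wt_nonneg hs (phiMap_im_pos m n q hlam hz₁ hz₂))
          (wt_nonneg hs (phiMap_im_pos m n q hlam hz₂ hz₁)) hw₁ hw₂ (by linarith) h₁₂ h₂₁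
    _ = 2 * 2 ^ p * c ^ (1 + p) * P ^ (1 + p) := by rw [Real.mul_rpow hc hP]; ring
    _ ≤ _ := by
        rw [mul_assoc (2 * 2 ^ p * c ^ (1 + p))]
        gcongr
        exact prod_one_add_sq_rpow_le q _ hp

lemma isCompact_closedStrip {E : Set ℝ} (hE : IsCompact E) (ε : ℝ) :
    IsCompact (closedStrip E ε) :=
  hE.reProdIm isCompact_Icc

lemma isCompact_setOf_one_add_normSq_le (T : ℝ) :
    IsCompact {z : ℂ | 1 + normSq z ≤ T * z.im} := by
  refine Metric.isCompact_of_isClosed_isBounded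
    (isClosed_le (continuous_const.add continuous_normSq) (continuous_const.mul continuous_im))
    ((Metric.isBounded_closedBall (x := 0) (r := |T|)).subset fun z hz => ?_)
  have hzT : 1 + ‖z‖ ^ 2 ≤ |T| * ‖z‖ := by
    rw [Complex.sq_norm]
    calc 1 + normSq z ≤ T * z.im := hz
      _ ≤ |T * z.im| := le_abs_self _
      _ ≤ |T| * ‖z‖ := by rw [abs_mul]; gcongr; exact abs_im_le_norm z
  rw [Metric.mem_closedBall, dist_zero_right]
  nlinarith [norm_nonneg z, abs_nonneg T]

lemma im_pos_of_one_add_normSq_le {T : ℝ} (hT : 0 ≤ T) {z : ℂ}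
    (hz : 1 + normSq z ≤ T * z.im) :
    0 < z.im := by
  by_contra! h
  nlinarith [normSq_nonneg z]

theorem statement3_general (m n : ℕ) (a b : ℝ)
    (ε₁ : ℝ) (hε₁ : 0 < ε₁) (Z : ℂ → ℂ)
    (hZcont : ContinuousOn Z (closedStrip (Set.Icc a b) ε₁))
    (hZim : ∀ lam ∈ closedStrip (Set.Icc a b) ε₁, 0 < (Z lam).im)
    (p : ℝ) (hp : 0 < p) :
    ∃ ε₀ : ℝ, 0 < ε₀ ∧ ε₀ ≤ ε₁ ∧ ∃ C > (0 : ℝ),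
      ∃ K : Set (ℂ × ℂ), IsCompact K ∧
        K ⊆ {z : ℂ × ℂ | 0 < z.1.im ∧ 0 < z.2.im} ∧
        ∀ z₁ z₂ : ℂ, 0 < z₁.im → 0 < z₂.im → (z₁, z₂) ∉ K →
          ∀ q : ℕ → ℝ, ∀ lam ∈ strip (Set.Icc a b) ε₀,
            muP m n p (Z lam) lam q z₁ z₂ ≤
              C * ∏ i ∈ Finset.range (m + n + 1), (1 + |q i| ^ (2 * (1 + p))) := by
  have hD := isCompact_closedStrip (isCompact_Icc (a := a) (b := b)) ε₁
  obtain ⟨L, -, hL⟩ := hD.isBounded.exists_pos_norm_le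
  obtain ⟨H, hH, hZH⟩ := (hD.image_of_continuousOn
    (continuousOn_twoCoshDistI.comp hZcont hZim)).isBounded.exists_pos_norm_le
  set K₀ := {z : ℂ | 1 + normSq z ≤ 3 * H * z.im}
  refine ⟨ε₁, hε₁, le_rfl,
    2 * 2 ^ p * (5 * H ^ 2 * phiMapGrowth m n L) ^ (1 + p) * (2 ^ p) ^ (m + n + 1),
    by have := phiMapGrowth_pos m n L; positivity, K₀ ×ˢ K₀,
    (isCompact_setOf_one_add_normSq_le _).prod (isCompact_setOf_one_add_normSq_le _), ?_, ?_⟩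
  · rintro ⟨z₁, z₂⟩ ⟨h₁, h₂⟩
    exact ⟨im_pos_of_one_add_normSq_le (by positivity) h₁,
      im_pos_of_one_add_normSq_le (by positivity) h₂⟩
  · intro z₁ z₂ hz₁ hz₂ hK q lam hlam
    have hlamD : lam ∈ closedStrip (Set.Icc a b) ε₁ := ⟨hlam.1, hlam.2.1.le, hlam.2.2⟩
    have hZH' : twoCoshDistI (Z lam) ≤ H :=
      (Real.le_norm_self _).trans (hZH _ ⟨lam, hlamD, rfl⟩)
    refine muP_le q hp.le (hZim lam hlamD) hZH' hlam.2.1 (hL lam hlamD) hz₁ hz₂ ?_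
    by_contra! hnear
    exact hK ⟨(twoCoshDistI_le_iff hz₁ _).1 hnear.1, (twoCoshDistI_le_iff hz₂ _).1 hnear.2⟩

/-- **Lemma 2.** Let `m ≠ n`, `E = [a,b]`, and `Z` a continuous map from
the closed strip of height `ε₁` over `E` into `ℍ` satisfying the fixed point equation.
Then for every `p ∈ (0,1)` there are positive constants `ε₀ ≤ ε₁`, `C` and a compact
`K ⊂ ℍ×ℍ` such that for all `(z₁,z₂) ∈ (ℍ×ℍ) \ K`, all `q_1,…,q_M ∈ ℝ` and all
`λ ∈ R(E,ε₀)`: `μ_p(z₁,z₂,q,λ) ≤ C·∏_{i=1}^M (1+|q_i|^{2(1+p)})`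
(weight based at `s = Z(λ)`). -/
theorem statement3 (m n : ℕ) (hmn : m ≠ n) (a b : ℝ) (hab : a ≤ b)
    (ε₁ : ℝ) (hε₁ : 0 < ε₁) (Z : ℂ → ℂ)
    (hZcont : ContinuousOn Z (closedStrip (Set.Icc a b) ε₁))
    (hZim : ∀ lam ∈ closedStrip (Set.Icc a b) ε₁, 0 < (Z lam).im)
    (hZfix : ∀ lam ∈ closedStrip (Set.Icc a b) ε₁,
      Z lam = phiMap m n lam (fun _ => 0) (Z lam) (Z lam))
    (p : ℝ) (hp : 0 < p) (hp1 : p < 1) :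
    ∃ ε₀ : ℝ, 0 < ε₀ ∧ ε₀ ≤ ε₁ ∧ ∃ C > (0 : ℝ),
      ∃ K : Set (ℂ × ℂ), IsCompact K ∧
        K ⊆ {z : ℂ × ℂ | 0 < z.1.im ∧ 0 < z.2.im} ∧
        ∀ z₁ z₂ : ℂ, 0 < z₁.im → 0 < z₂.im → (z₁, z₂) ∉ K →
          ∀ q : ℕ → ℝ, ∀ lam ∈ strip (Set.Icc a b) ε₀,
            muP m n p (Z lam) lam q z₁ z₂ ≤
              C * ∏ i ∈ Finset.range (m + n + 1), (1 + |q i| ^ (2 * (1 + p))) :=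
  statement3_general m n a b ε₁ hε₁ Z hZcont hZim p hp

end
end

section
/- (Criterion for absolute continuity.) Let μ be a finite Borel measure on ℝ with Stieltjes transform F(z) = ∫ dμ(t)/(t − z) for Im z > 0. Let (a,b) be a finite interval and p > 0. If liminf_{y → 0⁺} ∫_a^b |F(x + iy)|^{1+p} dx < ∞, then the restriction of μ to (a,b) is absolutely continuous with respect to Lebesgue measure (indeed dμ = g(x)dx on (a,b) with g ∈ L^{1+p}). -/
/-!
`Im F(x + iy)` is the Poisson integral of `μ`, and the Poisson kernel `P_y(·, t)` puts mass
tending to `π` on any neighbourhood of `t` as `y → 0⁺`. Choose `y_n → 0⁺` along which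
`∫_a^b |F(x + i y_n)|^{1+p} dx ≤ C`. For open `V ⊆ (a, b)`, Tonelli and Fatou give
`π μ(V) ≤ liminf ∫_V |F(x + i y_n)| dx`, which Hölder bounds by `C^{1/(1+p)} |V|^{p/(1+p)}`;
by outer regularity of Lebesgue measure, `μ` vanishes on null subsets of `(a, b)`.
For the density, `μ(B(x, y)) ≤ 2y |F(x + iy)|`, so by Besicovitch differentiation the
Radon–Nikodym derivative is at most `liminf |F(x + i y_n)|` almost everywhere, and Fatou
bounds its `L^{1+p}` norm by `C`.
-/

open MeasureTheory Filter Topology Metric Complex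
open scoped ENNReal

noncomputable section

lemma lintegral_le_lintegral_rpow_mul_measure_univ {α : Type*} [MeasurableSpace α]
    (ν : Measure α) {f : α → ℝ≥0∞} (hf : AEMeasurable f ν) {p : ℝ} (hp : 0 < p) :
    ∫⁻ x, f x ∂ν ≤ (∫⁻ x, f x ^ (1 + p) ∂ν) ^ (1 / (1 + p)) * ν Set.univ ^ (p / (1 + p)) := by
  have hpq : (1 + p).HolderConjugate ((1 + p) / p) :=
    Real.holderConjugate_iff.2 ⟨by linarith, by field_simp⟩
  have h := ENNReal.lintegral_mul_le_Lp_mul_Lq ν hpq hf aemeasurable_const (g := fun _ => 1)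
  have hq : 1 / ((1 + p) / p) = p / (1 + p) := by field_simp
  simpa [hq, lintegral_const] using h

lemma eq_zero_of_forall_mul_le_mul_rpow {c m K : ℝ≥0∞} {q : ℝ} (hc : c ≠ 0) (hK : K ≠ ⊤)
    (hq : 0 < q) (h : ∀ ε : ℝ≥0∞, 0 < ε → c * m ≤ K * ε ^ q) : m = 0 := by
  have hlim : Tendsto (fun n : ℕ => K * ((n : ℝ≥0∞)⁻¹) ^ q) atTop (𝓝 0) := by
    simpa [ENNReal.zero_rpow_of_pos hq] using ENNReal.Tendsto.const_mul
      (((ENNReal.continuous_rpow_const (y := q)).tendsto 0).comp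
        ENNReal.tendsto_inv_nat_nhds_zero) (Or.inr hK)
  have hcm : c * m ≤ 0 :=
    ge_of_tendsto' hlim fun n => h _ (ENNReal.inv_pos.2 (ENNReal.natCast_ne_top n))
  simpa [hc] using hcm

lemma exists_seq_tendsto_forall_le_of_liminf_lt_top {α : Type*} {l : Filter α}
    [l.IsCountablyGenerated] {f : α → ℝ≥0∞} (h : liminf f l < ⊤) {s : Set α} (hs : s ∈ l) :
    ∃ C ≠ ⊤, ∃ u : ℕ → α, Tendsto u atTop l ∧ ∀ n, u n ∈ s ∧ f (u n) ≤ C := by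
  obtain ⟨C, hlt, hC⟩ := exists_between h
  obtain ⟨u, hu, hus⟩ := exists_seq_forall_of_frequently
    ((frequently_lt_of_liminf_lt (by isBoundedDefault) hlt).and_eventually hs)
  exact ⟨C, hC.ne, u, hu, fun n => ⟨(hus n).2, (hus n).1.le⟩⟩

lemma MeasureTheory.Measure.AbsolutelyContinuous.restrict_eq_withDensity_rnDeriv {α : Type*}
    [MeasurableSpace α] {μ ν : Measure α} [SigmaFinite μ] [SigmaFinite ν] {s : Set α}
    (h : μ.restrict s ≪ ν) (hs : MeasurableSet s) :
    μ.restrict s = (ν.restrict s).withDensity ((μ.restrict s).rnDeriv ν) := by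
  rw [← restrict_withDensity hs, Measure.withDensity_rnDeriv_eq _ _ h,
    Measure.restrict_restrict hs, Set.inter_self]

def stieltjesTransform (μ : Measure ℝ) (z : ℂ) : ℂ := ∫ t, ((t : ℂ) - z)⁻¹ ∂μ

/-- `Im (t - (x + i y))⁻¹`: the Poisson kernel of the upper half-plane without the usual factor
`1 / π`, so its integral over `ℝ` is `π`. -/
def halfPlanePoissonKernel (y x t : ℝ) : ℝ := y / ((t - x) ^ 2 + y ^ 2)

section Kernels

variable {z : ℂ}

lemma ofReal_sub_ne_zero_of_im_pos (hz : 0 < z.im) (t : ℝ) : (t : ℂ) - z ≠ 0 := by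
  intro h
  have := congrArg Complex.im h
  simp only [sub_im, ofReal_im, zero_sub, zero_im, neg_eq_zero] at this
  exact hz.ne' this

lemma continuous_inv_ofReal_sub (hz : 0 < z.im) : Continuous fun t : ℝ => ((t : ℂ) - z)⁻¹ :=
  (continuous_ofReal.sub continuous_const).inv₀ (ofReal_sub_ne_zero_of_im_pos hz)

lemma norm_inv_ofReal_sub_le (hz : 0 < z.im) (t : ℝ) : ‖((t : ℂ) - z)⁻¹‖ ≤ z.im⁻¹ := by
  rw [norm_inv]
  refine inv_anti₀ hz ?_
  simpa [abs_of_pos hz] using abs_im_le_norm ((t : ℂ) - z)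

lemma integrable_inv_ofReal_sub (μ : Measure ℝ) [IsFiniteMeasure μ] (hz : 0 < z.im) :
    Integrable (fun t : ℝ => ((t : ℂ) - z)⁻¹) μ :=
  (integrable_const z.im⁻¹).mono' (continuous_inv_ofReal_sub hz).aestronglyMeasurable
    (Eventually.of_forall (norm_inv_ofReal_sub_le hz))

lemma im_inv_ofReal_sub (x y t : ℝ) :
    (((t : ℂ) - (x + y * I))⁻¹).im = halfPlanePoissonKernel y x t := by
  rw [inv_im, normSq_apply, halfPlanePoissonKernel]
  simp only [sub_im, ofReal_im, add_im, mul_im, ofReal_re, I_im, mul_one, I_re, mul_zero,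
    add_zero, zero_add, zero_sub, neg_neg, sub_re, add_re, mul_re, sub_self, mul_neg, neg_mul]
  ring

lemma halfPlanePoissonKernel_nonneg {y : ℝ} (hy : 0 ≤ y) (x t : ℝ) :
    0 ≤ halfPlanePoissonKernel y x t := by
  unfold halfPlanePoissonKernel
  positivity

lemma continuous_halfPlanePoissonKernel {y : ℝ} (hy : 0 < y) :
    Continuous fun q : ℝ × ℝ => halfPlanePoissonKernel y q.1 q.2 :=
  continuous_const.div (by fun_prop) fun q => by positivity

lemma hasDerivAt_arctan_div (t : ℝ) {y : ℝ} (hy : 0 < y) (x : ℝ) :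
    HasDerivAt (fun x => Real.arctan ((x - t) / y)) (halfPlanePoissonKernel y x t) x := by
  refine (((hasDerivAt_id x).sub_const t).div_const y).arctan.congr_deriv ?_
  simp only [id, halfPlanePoissonKernel]
  field_simp
  ring

lemma lintegral_Ioo_halfPlanePoissonKernel (t : ℝ) {y δ : ℝ} (hy : 0 < y) (hδ : 0 ≤ δ) :
    ∫⁻ x in Set.Ioo (t - δ) (t + δ), ENNReal.ofReal (halfPlanePoissonKernel y x t) =
      ENNReal.ofReal (2 * Real.arctan (δ / y)) := by
  have hint : IntervalIntegrable (fun x => halfPlanePoissonKernel y x t) volume (t - δ) (t + δ) :=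
    ((continuous_halfPlanePoissonKernel hy).comp
      (continuous_id.prodMk continuous_const)).intervalIntegrable _ _
  rw [← ofReal_integral_eq_lintegral_ofReal (hint.1.mono_set Set.Ioo_subset_Ioc_self)
      (Eventually.of_forall fun x => halfPlanePoissonKernel_nonneg hy.le x t),
    ← integral_Ioc_eq_integral_Ioo, ← intervalIntegral.integral_of_le (by linarith),
    intervalIntegral.integral_eq_sub_of_hasDerivAt (fun x _ => hasDerivAt_arctan_div t hy x) hint]
  congr 1
  rw [show t + δ - t = δ by ring, show t - δ - t = -δ by ring, neg_div, Real.arctan_neg]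
  ring

end Kernels

section StieltjesTransform

variable (μ : Measure ℝ) [IsFiniteMeasure μ] {x y : ℝ}

lemma ofReal_im_stieltjesTransform (hy : 0 < y) :
    ENNReal.ofReal (stieltjesTransform μ (x + y * I)).im =
      ∫⁻ t, ENNReal.ofReal (halfPlanePoissonKernel y x t) ∂μ := by
  have hint := integrable_inv_ofReal_sub μ (z := x + y * I) (by simpa using hy)
  rw [stieltjesTransform, ← RCLike.im_eq_complex_im, ← integral_im hint]
  simp only [RCLike.im_to_complex, im_inv_ofReal_sub]
  refine ofReal_integral_eq_lintegral_ofReal ?_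
    (Eventually.of_forall (halfPlanePoissonKernel_nonneg hy.le x))
  simpa only [RCLike.im_to_complex, im_inv_ofReal_sub] using hint.im

lemma continuous_stieltjesTransform_add_mul_I (hy : 0 < y) :
    Continuous fun x : ℝ => stieltjesTransform μ (x + y * I) := by
  have him : ∀ x : ℝ, 0 < ((x : ℂ) + y * I).im := fun x => by simpa using hy
  refine continuous_of_dominated (bound := fun _ => y⁻¹)
    (fun x => (continuous_inv_ofReal_sub (him x)).aestronglyMeasurable)
    (fun x => Eventually.of_forall fun t => by simpa using norm_inv_ofReal_sub_le (him x) t)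
    (integrable_const _) (Eventually.of_forall fun t => ?_)
  exact Continuous.inv₀ (by fun_prop) fun x => ofReal_sub_ne_zero_of_im_pos (him x) t

-- The Poisson kernel is at least `1 / (2y)` on `[x - y, x + y]`.
lemma measure_closedBall_div_volume_le (hy : 0 < y) :
    μ (closedBall x y) / volume (closedBall x y) ≤
      ENNReal.ofReal ‖stieltjesTransform μ (x + y * I)‖ := by
  rw [Real.volume_closedBall]
  refine ENNReal.div_le_of_le_mul ?_
  calc μ (closedBall x y) = ∫⁻ _ in closedBall x y, 1 ∂μ := (setLIntegral_one _).symm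
    _ ≤ ∫⁻ t in closedBall x y,
          ENNReal.ofReal (2 * y) * ENNReal.ofReal (halfPlanePoissonKernel y x t) ∂μ := by
        refine setLIntegral_mono' measurableSet_closedBall fun t ht => ?_
        rw [← ENNReal.ofReal_mul (by positivity), ENNReal.one_le_ofReal, halfPlanePoissonKernel,
          mul_div_assoc', le_div_iff₀ (by positivity)]
        have := sq_le_sq' (abs_le.1 (mem_closedBall_iff_norm.1 ht)).1
          (abs_le.1 (mem_closedBall_iff_norm.1 ht)).2
        nlinarith
    _ ≤ ENNReal.ofReal (2 * y) * ∫⁻ t, ENNReal.ofReal (halfPlanePoissonKernel y x t) ∂μ := by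
        rw [lintegral_const_mul' _ _ ENNReal.ofReal_ne_top]
        gcongr
        exact Measure.restrict_le_self
    _ ≤ ENNReal.ofReal (2 * y) * ENNReal.ofReal ‖stieltjesTransform μ (x + y * I)‖ := by
        rw [← ofReal_im_stieltjesTransform μ hy]
        gcongr
        exact im_le_norm _
    _ = _ := mul_comm _ _

end StieltjesTransform

section PoissonLowerBound

variable {V : Set ℝ} {y : ℕ → ℝ}

lemma ofReal_pi_le_liminf_lintegral_halfPlanePoissonKernel (hV : IsOpen V) {t : ℝ} (ht : t ∈ V)
    (hy : Tendsto y atTop (𝓝[>] 0)) :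
    ENNReal.ofReal Real.pi ≤
      liminf (fun n => ∫⁻ x in V, ENNReal.ofReal (halfPlanePoissonKernel (y n) x t)) atTop := by
  obtain ⟨δ, hδ, hball⟩ := Metric.isOpen_iff.1 hV t ht
  rw [Real.ball_eq_Ioo] at hball
  have harctan : Tendsto (fun n => Real.arctan (δ / y n)) atTop (𝓝 (Real.pi / 2)) := by
    refine (Real.tendsto_arctan_atTop.mono_right nhdsWithin_le_nhds).comp ?_
    simpa only [div_eq_mul_inv, Function.comp_def] using
      (tendsto_inv_nhdsGT_zero.comp hy).const_mul_atTop hδ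
  have hlim : Tendsto (fun n => ENNReal.ofReal (2 * Real.arctan (δ / y n))) atTop
      (𝓝 (ENNReal.ofReal Real.pi)) := by
    refine ENNReal.tendsto_ofReal ?_
    simpa [mul_div_cancel₀] using harctan.const_mul 2
  rw [← hlim.liminf_eq]
  refine liminf_le_liminf ((hy.eventually self_mem_nhdsWithin).mono fun n hn => ?_)
  rw [← lintegral_Ioo_halfPlanePoissonKernel t hn hδ.le]
  exact lintegral_mono_set hball

variable (μ : Measure ℝ) [IsFiniteMeasure μ]

lemma ofReal_pi_mul_measure_le_liminf (hV : IsOpen V) (hy : Tendsto y atTop (𝓝[>] 0))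
    (hy0 : ∀ n, 0 < y n) :
    ENNReal.ofReal Real.pi * μ V ≤
      liminf (fun n => ∫⁻ x in V, ENNReal.ofReal (stieltjesTransform μ (x + y n * I)).im)
        atTop := by
  have hmeas : ∀ n, Measurable (Function.uncurry fun t x =>
      ENNReal.ofReal (halfPlanePoissonKernel (y n) x t)) := fun n =>
    ((continuous_halfPlanePoissonKernel (hy0 n)).comp continuous_swap).measurable.ennreal_ofReal
  calc ENNReal.ofReal Real.pi * μ V = ∫⁻ _ in V, ENNReal.ofReal Real.pi ∂μ :=
        (setLIntegral_const _ _).symm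
    _ ≤ ∫⁻ t in V, liminf (fun n =>
          ∫⁻ x in V, ENNReal.ofReal (halfPlanePoissonKernel (y n) x t)) atTop ∂μ :=
        setLIntegral_mono' hV.measurableSet fun t ht =>
          ofReal_pi_le_liminf_lintegral_halfPlanePoissonKernel hV ht hy
    _ ≤ ∫⁻ t, liminf (fun n =>
          ∫⁻ x in V, ENNReal.ofReal (halfPlanePoissonKernel (y n) x t)) atTop ∂μ :=
        setLIntegral_le_lintegral _ _
    _ ≤ liminf (fun n =>
          ∫⁻ t, (∫⁻ x in V, ENNReal.ofReal (halfPlanePoissonKernel (y n) x t)) ∂μ) atTop :=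
        lintegral_liminf_le fun n => (hmeas n).lintegral_prod_right
    _ = _ := by
        congr 1 with n
        simp only [ofReal_im_stieltjesTransform μ (hy0 n)]
        exact lintegral_lintegral_swap (hmeas n).aemeasurable

end PoissonLowerBound

section Criterion

variable (μ : Measure ℝ) [IsFiniteMeasure μ] {y : ℕ → ℝ}

lemma ofReal_pi_mul_measure_le_of_forall_lintegral_le {p : ℝ} (hp : 0 < p) {V : Set ℝ}
    (hV : IsOpen V) (hy : Tendsto y atTop (𝓝[>] 0)) (hy0 : ∀ n, 0 < y n) {C : ℝ≥0∞}
    (hC : ∀ n, ∫⁻ x in V, ENNReal.ofReal (‖stieltjesTransform μ (x + y n * I)‖ ^ (1 + p)) ≤ C) :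
    ENNReal.ofReal Real.pi * μ V ≤ C ^ (1 / (1 + p)) * volume V ^ (p / (1 + p)) := by
  refine (ofReal_pi_mul_measure_le_liminf μ hV hy hy0).trans
    (liminf_le_of_frequently_le' (Frequently.of_forall fun n => ?_))
  have hmeas : Measurable fun x : ℝ => ENNReal.ofReal ‖stieltjesTransform μ (x + y n * I)‖ :=
    (continuous_stieltjesTransform_add_mul_I μ (hy0 n)).norm.measurable.ennreal_ofReal
  calc ∫⁻ x in V, ENNReal.ofReal (stieltjesTransform μ (x + y n * I)).im
      ≤ ∫⁻ x in V, ENNReal.ofReal ‖stieltjesTransform μ (x + y n * I)‖ :=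
        lintegral_mono fun x => ENNReal.ofReal_le_ofReal (im_le_norm _)
    _ ≤ (∫⁻ x in V, ENNReal.ofReal ‖stieltjesTransform μ (x + y n * I)‖ ^ (1 + p))
          ^ (1 / (1 + p)) * volume.restrict V Set.univ ^ (p / (1 + p)) :=
        lintegral_le_lintegral_rpow_mul_measure_univ _ hmeas.aemeasurable hp
    _ ≤ C ^ (1 / (1 + p)) * volume V ^ (p / (1 + p)) := by
        rw [Measure.restrict_apply_univ]
        gcongr
        refine le_of_eq_of_le (lintegral_congr fun x => ?_) (hC n)
        exact ENNReal.ofReal_rpow_of_nonneg (norm_nonneg _) (by linarith)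

lemma absolutelyContinuous_restrict_of_forall_lintegral_le {p : ℝ} (hp : 0 < p) {s : Set ℝ}
    (hs : IsOpen s) (hy : Tendsto y atTop (𝓝[>] 0)) (hy0 : ∀ n, 0 < y n) {C : ℝ≥0∞}
    (hCtop : C ≠ ⊤)
    (hC : ∀ n, ∫⁻ x in s, ENNReal.ofReal (‖stieltjesTransform μ (x + y n * I)‖ ^ (1 + p)) ≤ C) :
    μ.restrict s ≪ volume := by
  refine Measure.AbsolutelyContinuous.mk fun A hA hA0 => ?_
  rw [Measure.restrict_apply hA]
  refine eq_zero_of_forall_mul_le_mul_rpow (K := C ^ (1 / (1 + p)))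
    (ENNReal.ofReal_pos.2 Real.pi_pos).ne' (ENNReal.rpow_ne_top_of_nonneg (by positivity) hCtop)
    (by positivity : 0 < p / (1 + p)) fun ε hε => ?_
  obtain ⟨U, hAU, hU, hUε⟩ := Set.exists_isOpen_lt_of_lt A ε (by rwa [hA0])
  calc ENNReal.ofReal Real.pi * μ (A ∩ s) ≤ ENNReal.ofReal Real.pi * μ (U ∩ s) := by gcongr
    _ ≤ C ^ (1 / (1 + p)) * volume (U ∩ s) ^ (p / (1 + p)) :=
        ofReal_pi_mul_measure_le_of_forall_lintegral_le μ hp (hU.inter hs) hy hy0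
          fun n => (lintegral_mono_set Set.inter_subset_right).trans (hC n)
    _ ≤ C ^ (1 / (1 + p)) * ε ^ (p / (1 + p)) := by
        gcongr
        exact (measure_mono Set.inter_subset_left).trans hUε.le

lemma ae_rnDeriv_restrict_rpow_le_liminf (s : Set ℝ) {r : ℝ} (hr : 0 ≤ r)
    (hy : Tendsto y atTop (𝓝[>] 0)) (hy0 : ∀ n, 0 < y n) :
    ∀ᵐ x, (μ.restrict s).rnDeriv volume x ^ r ≤
      liminf (fun n => ENNReal.ofReal (‖stieltjesTransform μ (x + y n * I)‖ ^ r)) atTop := by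
  filter_upwards [Besicovitch.ae_tendsto_rnDeriv (μ.restrict s) volume] with x hx
  have hlim := ((ENNReal.continuous_rpow_const (y := r)).tendsto _).comp (hx.comp hy)
  rw [← hlim.liminf_eq]
  refine liminf_le_liminf (Eventually.of_forall fun n => ?_)
  rw [Function.comp_apply, Function.comp_apply,
    ← ENNReal.ofReal_rpow_of_nonneg (norm_nonneg _) hr]
  gcongr
  exact (ENNReal.div_le_div_right (Measure.restrict_apply_le _ _) _).trans
    (measure_closedBall_div_volume_le μ (hy0 n))

lemma setLIntegral_rnDeriv_restrict_rpow_le (s : Set ℝ) {r : ℝ} (hr : 0 ≤ r)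
    (hy : Tendsto y atTop (𝓝[>] 0)) (hy0 : ∀ n, 0 < y n) {C : ℝ≥0∞}
    (hC : ∀ n, ∫⁻ x in s, ENNReal.ofReal (‖stieltjesTransform μ (x + y n * I)‖ ^ r) ≤ C) :
    ∫⁻ x in s, (μ.restrict s).rnDeriv volume x ^ r ≤ C :=
  calc ∫⁻ x in s, (μ.restrict s).rnDeriv volume x ^ r
      ≤ ∫⁻ x in s, liminf (fun n =>
          ENNReal.ofReal (‖stieltjesTransform μ (x + y n * I)‖ ^ r)) atTop :=
        lintegral_mono_ae (ae_restrict_of_ae (ae_rnDeriv_restrict_rpow_le_liminf μ s hr hy hy0))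
    _ ≤ liminf (fun n =>
          ∫⁻ x in s, ENNReal.ofReal (‖stieltjesTransform μ (x + y n * I)‖ ^ r)) atTop :=
        lintegral_liminf_le fun n =>
          ((continuous_stieltjesTransform_add_mul_I μ (hy0 n)).norm.rpow_const
            fun _ => Or.inr hr).measurable.ennreal_ofReal
    _ ≤ C := liminf_le_of_frequently_le' (Frequently.of_forall hC)

end Criterion

theorem statement7_general (μ : Measure ℝ) [IsFiniteMeasure μ] (a b : ℝ)
    (p : ℝ) (hp : 0 < p)
    (F : ℂ → ℂ) (hF : ∀ z : ℂ, 0 < z.im → F z = ∫ t : ℝ, ((t : ℂ) - z)⁻¹ ∂μ)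
    (hliminf : Filter.liminf
      (fun y : ℝ => ∫⁻ x in Set.Ioo a b,
        ENNReal.ofReal (‖F ((x : ℂ) + (y : ℂ) * Complex.I)‖ ^ (1 + p)))
      (𝓝[>] (0 : ℝ)) < ⊤) :
    μ.restrict (Set.Ioo a b) ≪ MeasureTheory.volume ∧
    ∃ g : ℝ → ℝ≥0∞,
      μ.restrict (Set.Ioo a b) =
        (MeasureTheory.volume.restrict (Set.Ioo a b)).withDensity g ∧
      ∫⁻ x in Set.Ioo a b, g x ^ (1 + p) < ⊤ := by
  obtain ⟨C, hC, y, hy, hyC⟩ :=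
    exists_seq_tendsto_forall_le_of_liminf_lt_top hliminf self_mem_nhdsWithin
  have hy0 : ∀ n, 0 < y n := fun n => (hyC n).1
  have hFy : ∀ n, ∫⁻ x in Set.Ioo a b,
      ENNReal.ofReal (‖stieltjesTransform μ (x + y n * I)‖ ^ (1 + p)) ≤ C := fun n => by
    have hFn : ∀ x : ℝ, F (x + y n * I) = stieltjesTransform μ (x + y n * I) :=
      fun x => hF _ (by simpa using hy0 n)
    simpa only [hFn] using (hyC n).2
  have hac : μ.restrict (Set.Ioo a b) ≪ volume :=
    absolutelyContinuous_restrict_of_forall_lintegral_le μ hp isOpen_Ioo hy hy0 hC hFy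
  exact ⟨hac, _, hac.restrict_eq_withDensity_rnDeriv measurableSet_Ioo,
    (setLIntegral_rnDeriv_restrict_rpow_le μ _ (by linarith) hy hy0 hFy).trans_lt hC.lt_top⟩

/-- **criterion for absolute continuity.** Let `μ` be a finite Borel
measure on `ℝ` with Stieltjes transform `F(z) = ∫ dμ(t)/(t−z)` (`Im z > 0`).  Let
`(a,b)` be a finite interval and `p > 0`.  If
`liminf_{y→0⁺} ∫_a^b |F(x+iy)|^{1+p} dx < ∞`, then the restriction of `μ` to `(a,b)`
is absolutely continuous with respect to Lebesgue measure; indeed `dμ = g dx` on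
`(a,b)` with `g ∈ L^{1+p}`. -/
theorem statement7 (μ : Measure ℝ) [IsFiniteMeasure μ] (a b : ℝ) (hab : a < b)
    (p : ℝ) (hp : 0 < p)
    (F : ℂ → ℂ) (hF : ∀ z : ℂ, 0 < z.im → F z = ∫ t : ℝ, ((t : ℂ) - z)⁻¹ ∂μ)
    (hliminf : Filter.liminf
      (fun y : ℝ => ∫⁻ x in Set.Ioo a b,
        ENNReal.ofReal (‖F ((x : ℂ) + (y : ℂ) * Complex.I)‖ ^ (1 + p)))
      (𝓝[>] (0 : ℝ)) < ⊤) :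
    μ.restrict (Set.Ioo a b) ≪ MeasureTheory.volume ∧
    ∃ g : ℝ → ℝ≥0∞,
      μ.restrict (Set.Ioo a b) =
        (MeasureTheory.volume.restrict (Set.Ioo a b)).withDensity g ∧
      ∫⁻ x in Set.Ioo a b, g x ^ (1 + p) < ⊤ :=
  statement7_general μ a b p hp F hF hliminf

end
end

section
/- (Lemma on the recursion, part (i).) Fix integers n > m ≥ 1. The set of λ ∈ ℂ for which there exists z ∈ ℂ with R_m(z) = 0 and R_n(z) = 0 is finite. -/
noncomputable section

/-- Chebyshev-like coefficient polynomials. -/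
def Acoef : ℕ → Polynomial ℂ
  | 0 => 0
  | 1 => 1
  | (k+2) => (1 + Polynomial.X) * Acoef (k+1) - Acoef k

lemma Rfun_eq (lam : ℂ) : ∀ k z, Rfun lam k z
    = (Acoef k).eval lam * z + (Acoef (k+1)).eval lam := by
  intro k
  induction k using Nat.twoStepInduction with
  | zero => intro z; simp [Rfun, Acoef]
  | one => intro z; simp [Rfun, Acoef]; ring
  | more k ih1 ih2 =>
    intro z
    have h3 : Acoef (k+3) = (1 + Polynomial.X) * Acoef (k+2) - Acoef (k+1) := rfl
    simp only [Rfun, ih1, ih2, h3, show k+2+1 = k+3 from rfl,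
      show Acoef (k+2) = (1 + Polynomial.X) * Acoef (k+1) - Acoef k from rfl,
      Polynomial.eval_sub, Polynomial.eval_mul, Polynomial.eval_add,
      Polynomial.eval_one, Polynomial.eval_X]
    ring

lemma Acoef_eval_one : ∀ k, (Acoef k).eval 1 = (k : ℂ) := by
  intro k
  induction k using Nat.twoStepInduction with
  | zero => simp [Acoef]
  | one => simp [Acoef]
  | more k ih1 ih2 =>
    have h : Acoef (k+2) = (1 + Polynomial.X) * Acoef (k+1) - Acoef k := rfl
    rw [h]
    simp only [Polynomial.eval_sub, Polynomial.eval_mul, Polynomial.eval_add,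
      Polynomial.eval_one, Polynomial.eval_X, ih1, ih2]
    push_cast
    ring

/-- **Lemma on the recursion, part (i).** Fix integers `n > m ≥ 1`.
The set of `λ ∈ ℂ` for which `R_m` and `R_n` have a common zero is finite. -/
theorem statement8 (m n : ℕ) (hm : 1 ≤ m) (hmn : m < n) :
    {lam : ℂ | ∃ z : ℂ, Rfun lam m z = 0 ∧ Rfun lam n z = 0}.Finite := by
  set Q : Polynomial ℂ := Acoef n * Acoef (m+1) - Acoef m * Acoef (n+1) with hQ
  have hQne : Q ≠ 0 := by
    intro h
    have h1 : Q.eval 1 = 0 := by rw [h]; simp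
    rw [hQ] at h1
    simp only [Polynomial.eval_sub, Polynomial.eval_mul, Acoef_eval_one] at h1
    have : (n : ℂ) = m := by push_cast at h1; linear_combination h1
    have : n = m := by exact_mod_cast this
    omega
  apply Set.Finite.subset (Polynomial.finite_setOf_isRoot hQne)
  rintro lam ⟨z, h1, h2⟩
  rw [Rfun_eq] at h1 h2
  simp only [Set.mem_setOf_eq, Polynomial.IsRoot, hQ, Polynomial.eval_sub,
    Polynomial.eval_mul]
  linear_combination (Acoef n).eval lam * h1 - (Acoef m).eval lam * h2

end
end

section
/- (Lemma on the recursion, part (ii).) Fix integers n > m ≥ 1. The set of λ ∈ ℝ with (1+λ)² ≠ 4 for which there exists z ∈ ℂ with R_m(z) ≠ 0, R_m(z) ∉ ℝ and R_n(z)/R_m(z) ∈ ℝ is finite. -/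
/-!
Each `R_k(z)` is linear in `z`, `R_k(z) = A_k(λ) + U_k(λ) z`, with real polynomials `A_k`, `U_k`
satisfying the same recursion. For real `λ`, `Im (R_n / R_m) = (A_m U_n - A_n U_m) Im z / |R_m|²`,
and `R_m ∉ ℝ` forces `Im z ≠ 0`; so `λ` is a root of `A_m U_n - A_n U_m`. As a function of `j`,
`A_m U_{m+j} - A_{m+j} U_m` satisfies the recursion with initial values `0` and `1` (the
Wronskian), hence equals `U_j`; and `U_{n-m}` is a nonzero polynomial because `U_k(1) = k`.
-/

noncomputable section

open Polynomial

namespace Rfun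

def constCoeff : ℕ → ℝ[X]
  | 0 => 1
  | 1 => 1 + X
  | (k+2) => (1 + X) * constCoeff (k+1) - constCoeff k

def zCoeff : ℕ → ℝ[X]
  | 0 => 0
  | 1 => 1
  | (k+2) => (1 + X) * zCoeff (k+1) - zCoeff k

theorem eq_aeval (lam z : ℂ) :
    ∀ k, Rfun lam k z = aeval lam (constCoeff k) + aeval lam (zCoeff k) * z
  | 0 => by simp [Rfun, constCoeff, zCoeff]
  | 1 => by simp [Rfun, constCoeff, zCoeff]
  | (k+2) => by
      rw [Rfun, eq_aeval lam z (k+1), eq_aeval lam z k]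
      simp only [constCoeff, zCoeff, map_sub, map_mul, map_add, map_one, aeval_X]
      ring

theorem eq_eval_ofReal (lam : ℝ) (z : ℂ) (k : ℕ) :
    Rfun lam k z = ↑((constCoeff k).eval lam) + ↑((zCoeff k).eval lam) * z := by
  simp only [eq_aeval, ← Complex.coe_algebraMap, aeval_algebraMap_apply_eq_algebraMap_eval]

theorem wronskian (m : ℕ) :
    constCoeff m * zCoeff (m+1) - constCoeff (m+1) * zCoeff m = 1 := by
  induction m with
  | zero => simp [constCoeff, zCoeff]
  | succ m ih =>
      simp only [constCoeff, zCoeff]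
      linear_combination ih

theorem casoratian (m : ℕ) :
    ∀ j, constCoeff m * zCoeff (m+j) - constCoeff (m+j) * zCoeff m = zCoeff j
  | 0 => by simp [zCoeff]
  | 1 => by simpa [zCoeff] using wronskian m
  | (j+2) => by
      rw [← add_assoc]
      simp only [constCoeff, zCoeff]
      linear_combination (1 + (X : ℝ[X])) * casoratian m (j+1) - casoratian m j

theorem zCoeff_eval_one : ∀ k, (zCoeff k).eval 1 = k
  | 0 => by simp [zCoeff]
  | 1 => by simp [zCoeff]
  | (k+2) => by
      simp only [zCoeff, eval_sub, eval_mul, eval_add, eval_one, eval_X,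
        zCoeff_eval_one (k+1), zCoeff_eval_one k]
      push_cast
      ring

theorem zCoeff_ne_zero {k : ℕ} (hk : k ≠ 0) : zCoeff k ≠ 0 := by
  intro h
  simpa [h, eq_comm, hk] using zCoeff_eval_one k

end Rfun

theorem Complex.det_eq_zero_of_im_div_eq_zero {a b c d : ℝ} {z : ℂ} (hv : (a : ℂ) + b * z ≠ 0)
    (hz : z.im ≠ 0) (h : (((c : ℂ) + d * z) / (a + b * z)).im = 0) : a * d - c * b = 0 := by
  have hn : Complex.normSq ((a : ℂ) + b * z) ≠ 0 := by simpa using hv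
  rw [Complex.div_im, ← sub_div, div_eq_zero_iff, or_iff_left hn] at h
  simp only [Complex.add_im, Complex.add_re, Complex.mul_im, Complex.mul_re, Complex.ofReal_re,
    Complex.ofReal_im] at h
  apply (mul_eq_zero.1 _).resolve_right hz
  linear_combination h

theorem statement9_general (m n : ℕ) (hmn : m < n) :
    {lam : ℝ | (1 + lam) ^ 2 ≠ 4 ∧
      ∃ z : ℂ, Rfun (lam : ℂ) m z ≠ 0 ∧ (Rfun (lam : ℂ) m z).im ≠ 0 ∧
        (Rfun (lam : ℂ) n z / Rfun (lam : ℂ) m z).im = 0}.Finite := by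
  refine (finite_setOfPred_isRoot (Rfun.zCoeff_ne_zero (Nat.sub_ne_zero_of_lt hmn))).subset ?_
  rintro lam ⟨-, z, hRm, hRm_im, hquot⟩
  simp only [Rfun.eq_eval_ofReal] at hRm hRm_im hquot
  have hz : z.im ≠ 0 := fun h => hRm_im (by simp [h])
  have hdet := Complex.det_eq_zero_of_im_div_eq_zero hRm hz hquot
  have hcas := congrArg (eval lam) (Rfun.casoratian m (n - m))
  rw [Nat.add_sub_cancel' hmn.le] at hcas
  simp only [eval_sub, eval_mul] at hcas
  rw [Set.mem_ofPred_eq, IsRoot.def, ← hcas, hdet]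

/-- **Lemma on the recursion, part (ii).** Fix integers `n > m ≥ 1`.
The set of real `λ` with `(1+λ)² ≠ 4` for which there exists `z ∈ ℂ` with
`R_m(z) ≠ 0`, `R_m(z) ∉ ℝ` and `R_n(z)/R_m(z) ∈ ℝ` is finite. -/
theorem statement9 (m n : ℕ) (hm : 1 ≤ m) (hmn : m < n) :
    {lam : ℝ | (1 + lam) ^ 2 ≠ 4 ∧
      ∃ z : ℂ, Rfun (lam : ℂ) m z ≠ 0 ∧ (Rfun (lam : ℂ) m z).im ≠ 0 ∧
        (Rfun (lam : ℂ) n z / Rfun (lam : ℂ) m z).im = 0}.Finite :=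
  statement9_general m n hmn

end
end
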